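/- arXiv:2207.07479 — 2 statements merged into one kernel-verified Lean document; each statement's English description precedes it below -/
import Mathlib

section
/- The G-preorder is a simulation: for every timed automaton A (possibly with diagonal constraints), the relation ≼_G defined from the least-fixpoint constraint map G of A is a simulation on the configurations of A. -/
open Classical

namespace Timed

/-- A clock valuation assigns a nonnegative real to every clock. -/
abbrev Val (X : Type) := X → NNReal

/-- Time elapse on valuations: `(v+δ)(x) = v(x)+δ`. -/
noncomputable def addVal {X : Type} (v : Val X) (δ : NNReal) : Val X := fun x => v x + δ

/-- Reset of the clocks in `Y` to `0`. -/
noncomputable def resetVal {X : Type} (Y : Set X) (v : Val X) : Val X :=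
  fun x => if x ∈ Y then 0 else v x

/-- Comparison operators `<, ≤, =, ≥, >`. -/
inductive CmpOp | lt | le | eq | ge | gt

def CmpOp.holds : CmpOp → ℝ → ℝ → Prop
  | .lt, a, b => a < b
  | .le, a, b => a ≤ b
  | .eq, a, b => a = b
  | .ge, a, b => a ≥ b
  | .gt, a, b => a > b

/-- Clock constraints: finite conjunctions of `x ⋈ c` and `x - y ⋈ c` (and `true`). -/
inductive ClockConstraint (X : Type) where
  | tt : ClockConstraint X
  | single : X → CmpOp → ℤ → ClockConstraint X
  | diag : X → X → CmpOp → ℤ → ClockConstraint X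
  | conj : ClockConstraint X → ClockConstraint X → ClockConstraint X

def ClockConstraint.sat {X : Type} (v : Val X) : ClockConstraint X → Prop
  | .tt => True
  | .single x op c => op.holds (v x : ℝ) (c : ℝ)
  | .diag x y op c => op.holds ((v x : ℝ) - (v y : ℝ)) (c : ℝ)
  | .conj g₁ g₂ => g₁.sat v ∧ g₂.sat v

/-- `⟦g⟧`, the set of valuations satisfying `g`. -/
def sem {X : Type} (g : ClockConstraint X) : Set (Val X) := {v | g.sat v}

/-- A zone is a set of valuations definable by a clock constraint. -/
def IsZone {X : Type} (Z : Set (Val X)) : Prop := ∃ g : ClockConstraint X, Z = sem g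

/-- Future (time elapse) of a set of valuations. -/
def future {X : Type} (W : Set (Val X)) : Set (Val X) :=
  {w | ∃ v ∈ W, ∃ δ : NNReal, w = addVal v δ}

/-- Reset of a set of valuations: `[Y]W`. -/
def resetSet {X : Type} (Y : Set X) (W : Set (Val X)) : Set (Val X) :=
  resetVal Y '' W

/-- A timed automaton `(Q, X, q₀, T, F)`. -/
structure Automaton (Q X : Type) where
  init : Q
  trans : Set (Q × ClockConstraint X × Set X × Q)
  final : Set Q

/-- `Post_t(W) = {v' : ∃ v ∈ W, ∃ δ ≥ 0, v ⊨ g ∧ v' = [Y]v + δ}` for `t = (q,g,Y,q')`. -/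
def Post {Q X : Type} (t : Q × ClockConstraint X × Set X × Q) (W : Set (Val X)) :
    Set (Val X) :=
  {w | ∃ v ∈ W, ∃ δ : NNReal, t.2.1.sat v ∧ w = addVal (resetVal t.2.2.1 v) δ}

/-- The zero valuation. -/
def zeroVal (X : Type) : Val X := fun _ => 0

/-- One step of the semantics: a time elapse or a discrete transition. -/
inductive Step {Q X : Type} (A : Automaton Q X) : (Q × Val X) → (Q × Val X) → Prop
  | delay (q : Q) (v : Val X) (δ : NNReal) : Step A (q, v) (q, addVal v δ)
  | disc {q : Q} {v : Val X} {g : ClockConstraint X} {R : Set X} {q₁ : Q}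
      (ht : (q, g, R, q₁) ∈ A.trans) (hg : g.sat v) :
      Step A (q, v) (q₁, resetVal R v)

/-- A configuration is reachable if some finite run from `(q₀, 0)` ends in it. -/
def Reachable {Q X : Type} (A : Automaton Q X) (c : Q × Val X) : Prop :=
  Relation.ReflTransGen (Step A) (A.init, zeroVal X) c

/-- The initial zone `Z₀ = future {0}`. -/
def initZone (X : Type) : Set (Val X) := future {zeroVal X}

/-- The set `S` of reachable symbolic states: least set containing `(q₀, Z₀)` and
closed under nonempty `Post`. -/
inductive SymbReach {Q X : Type} (A : Automaton Q X) : Q × Set (Val X) → Prop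
  | init : SymbReach A (A.init, initZone X)
  | step {q : Q} {Z : Set (Val X)} {g : ClockConstraint X} {Y : Set X} {q' : Q}
      (h : SymbReach A (q, Z)) (ht : (q, g, Y, q') ∈ A.trans)
      (hne : Post (q, g, Y, q') Z ≠ ∅) :
      SymbReach A (q', Post (q, g, Y, q') Z)

/-- `N` is saturated w.r.t. the extrapolation operator `extra`. -/
def ExtraSaturated {Q X : Type} (A : Automaton Q X)
    (extra : Q → Set (Val X) → Set (Val X)) (N : Set (Q × Set (Val X))) : Prop :=
  (∃ Z'', (A.init, Z'') ∈ N ∧ extra A.init (initZone X) ⊆ Z'') ∧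
  ∀ q Z, (q, Z) ∈ N → ∀ g Y q', (q, g, Y, q') ∈ A.trans →
    Post (q, g, Y, q') Z ≠ ∅ →
    ∃ Z'', (q', Z'') ∈ N ∧ extra q' (Post (q, g, Y, q') Z) ⊆ Z''

/-- A `K`-bounded clock constraint: every `x ⋈ c` has `-K x ≤ c ≤ K x` and
every `x - y ⋈ c` has `-K y ≤ c ≤ K x`. -/
def KBounded {X : Type} (K : X → ℕ) : ClockConstraint X → Prop
  | .tt => True
  | .single x _ c => -(K x : ℤ) ≤ c ∧ c ≤ (K x : ℤ)
  | .diag x y _ c => -(K y : ℤ) ≤ c ∧ c ≤ (K x : ℤ)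
  | .conj g₁ g₂ => KBounded K g₁ ∧ KBounded K g₂

/-- A `K`-bounded zone. -/
def IsKBoundedZone {X : Type} (K : X → ℕ) (Z : Set (Val X)) : Prop :=
  ∃ g : ClockConstraint X, KBounded K g ∧ Z = sem g

/-- An `LU`-bounded clock constraint: every `x ⋈ c` has `-U x ≤ c ≤ L x` and
every `x - y ⋈ c` has `-U y ≤ c ≤ L x`. -/
def LUBounded {X : Type} (L U : X → ℕ) : ClockConstraint X → Prop
  | .tt => True
  | .single x _ c => -(U x : ℤ) ≤ c ∧ c ≤ (L x : ℤ)
  | .diag x y _ c => -(U y : ℤ) ≤ c ∧ c ≤ (L x : ℤ)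
  | .conj g₁ g₂ => LUBounded L U g₁ ∧ LUBounded L U g₂

/-- An `LU`-bounded zone. -/
def IsLUBoundedZone {X : Type} (L U : X → ℕ) (Z : Set (Val X)) : Prop :=
  ∃ g : ClockConstraint X, LUBounded L U g ∧ Z = sem g

/-- A diagonal-free clock constraint. -/
def DiagFree {X : Type} : ClockConstraint X → Prop
  | .tt => True
  | .single _ _ _ => True
  | .diag _ _ _ _ => False
  | .conj g₁ g₂ => DiagFree g₁ ∧ DiagFree g₂

/-- Every atomic constraint `x ⋈ c` of the guard satisfies `c ≤ K x`. -/
def GuardKBounded {X : Type} (K : X → ℕ) : ClockConstraint X → Prop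
  | .tt => True
  | .single x _ c => c ≤ (K x : ℤ)
  | .diag _ _ _ _ => True
  | .conj g₁ g₂ => GuardKBounded K g₁ ∧ GuardKBounded K g₂

/-- `LU`-boundedness of guards: `x < c`, `x ≤ c` need `c ≤ U x`; `x > d`, `x ≥ d`
need `d ≤ L x`; `x = c` needs both. -/
def GuardLUBounded {X : Type} (L U : X → ℕ) : ClockConstraint X → Prop
  | .tt => True
  | .single x op c =>
      match op with
      | .lt => c ≤ (U x : ℤ)
      | .le => c ≤ (U x : ℤ)
      | .gt => c ≤ (L x : ℤ)
      | .ge => c ≤ (L x : ℤ)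
      | .eq => c ≤ (U x : ℤ) ∧ c ≤ (L x : ℤ)
  | .diag _ _ _ _ => True
  | .conj g₁ g₂ => GuardLUBounded L U g₁ ∧ GuardLUBounded L U g₂

/-- A (strong timed) simulation: a preorder relating only configurations with the same
state, compatible with time elapses and discrete transitions. -/
def IsSimulation {Q X : Type} (A : Automaton Q X)
    (R : (Q × Val X) → (Q × Val X) → Prop) : Prop :=
  (∀ c, R c c) ∧
  (∀ c₁ c₂ c₃, R c₁ c₂ → R c₂ c₃ → R c₁ c₃) ∧
  (∀ c c', R c c' → c.1 = c'.1) ∧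
  (∀ q v v', R (q, v) (q, v') →
    (∀ δ : NNReal, R (q, addVal v δ) (q, addVal v' δ)) ∧
    (∀ g Y q₁, (q, g, Y, q₁) ∈ A.trans → g.sat v →
      g.sat v' ∧ R (q₁, resetVal Y v) (q₁, resetVal Y v')))

/-- Labels of run steps: a delay, or a discrete transition. -/
inductive RunLabel (Q X : Type) where
  | delay : NNReal → RunLabel Q X
  | disc : Q × ClockConstraint X × Set X × Q → RunLabel Q X

/-- Finite runs with an explicit sequence of delays and transitions. -/
inductive LRun {Q X : Type} (A : Automaton Q X) :
    (Q × Val X) → List (RunLabel Q X) → (Q × Val X) → Prop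
  | refl (c : Q × Val X) : LRun A c [] c
  | delay {q : Q} {v : Val X} (δ : NNReal) {l : List (RunLabel Q X)} {c' : Q × Val X}
      (h : LRun A (q, addVal v δ) l c') : LRun A (q, v) (RunLabel.delay δ :: l) c'
  | disc {q : Q} {v : Val X} {g : ClockConstraint X} {Y : Set X} {q₁ : Q}
      {l : List (RunLabel Q X)} {c' : Q × Val X}
      (ht : (q, g, Y, q₁) ∈ A.trans) (hg : g.sat v)
      (h : LRun A (q₁, resetVal Y v) l c') :
      LRun A (q, v) (RunLabel.disc (q, g, Y, q₁) :: l) c'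

/-- `N` is saturated w.r.t. the simulation `R`. -/
def SimSaturated {Q X : Type} (A : Automaton Q X)
    (R : (Q × Val X) → (Q × Val X) → Prop) (N : Set (Q × Set (Val X))) : Prop :=
  (∃ Z'', (A.init, Z'') ∈ N ∧ ∀ v ∈ initZone X, ∃ v' ∈ Z'', R (A.init, v) (A.init, v')) ∧
  ∀ q Z, (q, Z) ∈ N → ∀ g Y q', (q, g, Y, q') ∈ A.trans →
    Post (q, g, Y, q') Z ≠ ∅ →
    ∃ Z'', (q', Z'') ∈ N ∧ ∀ v ∈ Post (q, g, Y, q') Z, ∃ v' ∈ Z'', R (q', v) (q', v')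

/-- Atomic constraints, allowing the zero clock `x₀` on the left of a difference. -/
inductive Atom (X : Type) where
  | single : X → CmpOp → ℤ → Atom X
  | negSingle : X → CmpOp → ℤ → Atom X    -- `x₀ - y ⋈ c`
  | diag : X → X → CmpOp → ℤ → Atom X

def Atom.sat {X : Type} (v : Val X) : Atom X → Prop
  | .single x op c => op.holds (v x : ℝ) (c : ℝ)
  | .negSingle y op c => op.holds (-(v y : ℝ)) (c : ℝ)
  | .diag x y op c => op.holds ((v x : ℝ) - (v y : ℝ)) (c : ℝ)

/-- `pre(φ, Y)` of an atomic constraint w.r.t. a reset set `Y`. -/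
noncomputable def preAtom {X : Type} (Y : Set X) : Atom X → Set (Atom X)
  | .single x op c => if x ∈ Y then ∅ else {Atom.single x op c}
  | .negSingle y op c => if y ∈ Y then ∅ else {Atom.negSingle y op c}
  | .diag x y op c =>
      if x ∈ Y then (if y ∈ Y then ∅ else {Atom.negSingle y op c})
      else (if y ∈ Y then {Atom.single x op c} else {Atom.diag x y op c})

/-- The set of atomic constraints of a guard. -/
def atomsOf {X : Type} : ClockConstraint X → Set (Atom X)
  | .tt => ∅
  | .single x op c => {Atom.single x op c}
  | .diag x y op c => {Atom.diag x y op c}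
  | .conj g₁ g₂ => atomsOf g₁ ∪ atomsOf g₂

/-- One step of the fixpoint equations defining the constraint map `G`. -/
noncomputable def cmapStep {Q X : Type} (A : Automaton Q X)
    (G : Q → Set (Atom X)) (q : Q) : Set (Atom X) :=
  {φ | ∃ g Y q', (q, g, Y, q') ∈ A.trans ∧
        (φ ∈ atomsOf g ∨ ∃ ψ ∈ G q', φ ∈ preAtom Y ψ)}

/-- The `G`-preorder: `(q,v) ≼_G (q,v')` iff for all `δ` and all `φ ∈ G q`,
`v+δ ⊨ φ` implies `v'+δ ⊨ φ` (only configurations with the same state are related). -/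
def GPre {Q X : Type} (G : Q → Set (Atom X)) (c c' : Q × Val X) : Prop :=
  c.1 = c'.1 ∧
  ∀ δ : NNReal, ∀ φ ∈ G c.1, Atom.sat (addVal c.2 δ) φ → Atom.sat (addVal c'.2 δ) φ

end Timed
open Timed

lemma Timed.addVal_zero {X : Type} (v : Val X) : addVal v 0 = v := by
  funext x; simp [addVal]

lemma Timed.addVal_addVal {X : Type} (v : Val X) (a b : NNReal) :
    addVal (addVal v a) b = addVal v (a + b) := by
  funext x; simp [addVal, add_assoc]

lemma Timed.sat_mono {X : Type} {w w' : Val X} (g : ClockConstraint X)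
    (h : ∀ φ ∈ atomsOf g, Atom.sat w φ → Atom.sat w' φ) :
    g.sat w → g.sat w' := by
  induction g with
  | tt => intro _; trivial
  | single x op c => exact h _ rfl
  | diag x y op c => exact h _ rfl
  | conj g₁ g₂ ih₁ ih₂ =>
      rintro ⟨h1, h2⟩
      exact ⟨ih₁ (fun φ hφ => h φ (Or.inl hφ)) h1,
             ih₂ (fun φ hφ => h φ (Or.inr hφ)) h2⟩

/-- the `G`-preorder defined from the least-fixpoint constraint map
is a simulation. -/
theorem gpre_is_simulation {Q X : Type} [Fintype Q] [Fintype X]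
    (A : Automaton Q X) (hT : A.trans.Finite)
    (G : Q → Set (Atom X))
    (hfix : cmapStep A G = G)
    (hleast : ∀ G' : Q → Set (Atom X), cmapStep A G' = G' → ∀ q, G q ⊆ G' q) :
    IsSimulation A (GPre G) := by
  refine ⟨?_, ?_, ?_, ?_⟩
  · intro c; exact ⟨rfl, fun δ φ _ h => h⟩
  · rintro c₁ c₂ c₃ ⟨h12, H12⟩ ⟨h23, H23⟩
    refine ⟨h12.trans h23, fun δ φ hφ h => ?_⟩
    exact H23 δ φ (h12 ▸ hφ) (H12 δ φ hφ h)
  · intro c c' h; exact h.1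
  · rintro q v v' ⟨-, hG⟩
    constructor
    · intro δ₀
      refine ⟨rfl, fun δ φ hφ h => ?_⟩
      rw [addVal_addVal] at h ⊢
      exact hG _ φ hφ h
    · intro g Y q₁ ht hgv
      have hmemG : ∀ φ ∈ atomsOf g, φ ∈ G q := by
        intro φ hφ
        rw [← hfix]
        exact ⟨g, Y, q₁, ht, Or.inl hφ⟩
      refine ⟨?_, rfl, ?_⟩
      · refine sat_mono g (fun φ hφ h => ?_) hgv
        have := hG 0 φ (hmemG φ hφ)
        rw [addVal_zero, addVal_zero] at this
        exact this h
      · intro δ φ hφ hsat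
        have hpre : ∀ ψ, ψ ∈ preAtom Y φ → ψ ∈ G q := by
          intro ψ hψ
          rw [← hfix]
          exact ⟨g, Y, q₁, ht, Or.inr ⟨φ, hφ, hψ⟩⟩
        cases φ with
        | single x op c =>
          by_cases hx : x ∈ Y
          · simp only [Atom.sat, addVal, resetVal, if_pos hx] at hsat ⊢
            exact hsat
          · have hψ : Atom.single x op c ∈ G q :=
              hpre _ (by simp [preAtom, hx])
            have h1 := hG δ _ hψ
            simp only [Atom.sat, addVal, resetVal, if_neg hx] at hsat h1 ⊢
            exact h1 hsat
        | negSingle y op c =>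
          by_cases hy : y ∈ Y
          · simp only [Atom.sat, addVal, resetVal, if_pos hy] at hsat ⊢
            exact hsat
          · have hψ : Atom.negSingle y op c ∈ G q :=
              hpre _ (by simp [preAtom, hy])
            have h1 := hG δ _ hψ
            simp only [Atom.sat, addVal, resetVal, if_neg hy] at hsat h1 ⊢
            exact h1 hsat
        | diag x y op c =>
          by_cases hx : x ∈ Y <;> by_cases hy : y ∈ Y
          · simp only [Atom.sat, addVal, resetVal, if_pos hx, if_pos hy] at hsat ⊢
            exact hsat
          · -- x ∈ Y, y ∉ Y : use negSingle y
            have hψ : Atom.negSingle y op c ∈ G q :=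
              hpre _ (by simp [preAtom, hx, hy])
            have h1 := hG 0 _ hψ
            simp only [Atom.sat, addVal, resetVal, if_pos hx, if_neg hy] at hsat h1 ⊢
            have e1 : ((0 + δ : NNReal) : ℝ) - ((v y + δ : NNReal) : ℝ)
                = -((v y + 0 : NNReal) : ℝ) := by push_cast; ring
            have e2 : ((0 + δ : NNReal) : ℝ) - ((v' y + δ : NNReal) : ℝ)
                = -((v' y + 0 : NNReal) : ℝ) := by push_cast; ring
            rw [e2]
            exact h1 (e1 ▸ hsat)
          · -- x ∉ Y, y ∈ Y : use single x
            have hψ : Atom.single x op c ∈ G q :=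
              hpre _ (by simp [preAtom, hx, hy])
            have h1 := hG 0 _ hψ
            simp only [Atom.sat, addVal, resetVal, if_neg hx, if_pos hy] at hsat h1 ⊢
            have e1 : ((v x + δ : NNReal) : ℝ) - ((0 + δ : NNReal) : ℝ)
                = ((v x + 0 : NNReal) : ℝ) := by push_cast; ring
            have e2 : ((v' x + δ : NNReal) : ℝ) - ((0 + δ : NNReal) : ℝ)
                = ((v' x + 0 : NNReal) : ℝ) := by push_cast; ring
            rw [e2]
            exact h1 (e1 ▸ hsat)
          · -- x ∉ Y, y ∉ Y : use diag itself
            have hψ : Atom.diag x y op c ∈ G q :=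
              hpre _ (by simp [preAtom, hx, hy])
            have h1 := hG δ _ hψ
            simp only [Atom.sat, addVal, resetVal, if_neg hx, if_neg hy] at hsat h1 ⊢
            exact h1 hsat
end

section
/- The G-preorder is finite: for every timed automaton A (possibly with diagonal constraints), with G its least-fixpoint constraint map, every infinite sequence (q_1, Z_1), (q_2, Z_2), … of symbolic states of A contains indices i < j with q_i = q_j and (q_j, Z_j) ≼_G (q_i, Z_i), where ≼_G is extended to zones by (q,Z) ≼_G (q,Z') iff for all v ∈ Z there is v' ∈ Z' with (q,v) ≼_G (q,v'). -/
open Classical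

open Timed

/-!
Let `M` bound the constants of `G`: it exists because `pre` never changes a constant, so `G` only
uses constants of guards. The profile of a valuation is its region for constants up to `M`, i.e.
which comparisons `x - y ≤ c` with `|c| ≤ M` hold, the zero clock included. For a zone `Z`, the
valuations `≼_G`-simulated by some valuation of `Z` form a union of profile classes: if `v ≼_G v'`
with `v' ∈ Z` and `u` has the profile of `v`, there is an increasing `f : ℝ → ℝ` commuting with
integer translations with `f (v x) = u x` on the clocks below `M`. Such an `f` preserves every
comparison `x - y ⋈ n` with `n ∈ ℤ`, so `f ∘ v'` lies in `Z`, and it simulates `u` because clocks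
above `M` only meet constraints they already exceed. As there are finitely many states and
finitely many sets of profiles, two symbolic states of the sequence agree on both, which is
the claim.
-/

open Filter Topology

theorem exists_strictMono_extension {ι : Type*} [Finite ι] (a b : ι → ℝ)
    (h : ∀ i j, a i ≤ a j ↔ b i ≤ b j) : ∃ g : ℝ → ℝ, StrictMono g ∧ ∀ i, g (a i) = b i := by
  have hlt : ∀ i j, a i < a j → b i < b j := fun i j hij => by
    simpa only [not_le] using (h j i).not.1 hij.not_ge
  -- For small `ε > 0`, `b - ε a` is monotone in `a`; extend it monotonically and add `ε t` back.
  obtain ⟨ε, hslope, hε⟩ : ∃ ε : ℝ, (∀ p : ι × ι, a p.1 < a p.2 →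
      ε * (a p.2 - a p.1) ≤ b p.2 - b p.1) ∧ 0 < ε := by
    refine ((eventually_all.2 fun p => ?_).and self_mem_nhdsWithin).exists (f := 𝓝[>] 0)
    by_cases hp : a p.1 < a p.2
    · have hlim : Tendsto (fun ε : ℝ => ε * (a p.2 - a p.1)) (𝓝[>] 0) (𝓝 0) :=
        ((continuous_mul_const _).tendsto' 0 0 (zero_mul _)).mono_left nhdsWithin_le_nhds
      exact (hlim.eventually (eventually_le_nhds (sub_pos.2 (hlt _ _ hp)))).mono
        fun _ hle _ => hle
    · exact .of_forall fun _ h => absurd h hp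
  have hfac : (fun i => b i - ε * a i).FactorsThrough a := fun i j hij => by
    have := (h i j).1 hij.le
    have := (h j i).1 hij.ge
    simp only [hij]; linarith
  set f := Function.extend a (fun i => b i - ε * a i) 0
  have hf : ∀ i, f (a i) = b i - ε * a i := hfac.extend_apply 0
  have hmono : MonotoneOn f (Set.range a) := by
    rintro _ ⟨i, rfl⟩ _ ⟨j, rfl⟩ hij
    rw [hf, hf]
    rcases hij.lt_or_eq with hij | hij
    · linarith [hslope (i, j) hij]
    · exact (hfac hij).le
  obtain ⟨F, hF, hFf⟩ := hmono.exists_monotone_extension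
    ((Set.finite_range a).image f).bddBelow ((Set.finite_range a).image f).bddAbove
  refine ⟨fun t => F t + ε * t, hF.add_strictMono (strictMono_mul_left_of_pos hε), fun i => ?_⟩
  show F (a i) + ε * a i = b i
  rw [← hFf ⟨i, rfl⟩, hf]
  ring

theorem exists_circleDeg1Lift_extension {ι : Type*} [Finite ι] (a b : ι → ℝ) (i₀ : ι)
    (ha₀ : a i₀ = 0) (hb₀ : b i₀ = 0) (h : ∀ i j (n : ℤ), a i ≤ a j + n ↔ b i ≤ b j + n) :
    ∃ f : CircleDeg1Lift, StrictMono f ∧ ∀ i, f (a i) = b i := by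
  have hfloor : ∀ i, ⌊a i⌋ = ⌊b i⌋ := fun i => by
    have h₁ : ∀ n : ℤ, (n : ℝ) ≤ a i ↔ n ≤ b i := fun n => by
      simpa [ha₀, hb₀, neg_le_iff_add_nonneg'] using h i₀ i (-n)
    exact le_antisymm (Int.le_floor.2 ((h₁ _).1 (Int.floor_le _)))
      (Int.le_floor.2 ((h₁ _).2 (Int.floor_le _)))
  have hfract : ∀ i j, Int.fract (a i) ≤ Int.fract (a j) ↔ Int.fract (b i) ≤ Int.fract (b j) :=
    fun i j => by
      have := h i j (⌊a i⌋ - ⌊a j⌋)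
      simp only [Int.fract, hfloor, Int.cast_sub] at this ⊢
      constructor <;> intro h'
      · linarith [this.1 (by linarith)]
      · linarith [this.2 (by linarith)]
  -- The lift is `t ↦ ⌊t⌋ + g (fract t)`, where `g` is increasing, matches the fractional parts
  -- and fixes `1` (and `0`, through `i₀`).
  obtain ⟨g, hg, hga⟩ := exists_strictMono_extension
    (fun p : Option ι => p.elim 1 fun i => Int.fract (a i))
    (fun p : Option ι => p.elim 1 fun i => Int.fract (b i)) <| by
      rintro (_ | i) (_ | j) <;>
        simp [hfract, (Int.fract_lt_one _).le, (Int.fract_lt_one _).not_ge]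
  have hga' : ∀ i, g (Int.fract (a i)) = Int.fract (b i) := fun i => hga (some i)
  have hg0 : g 0 = 0 := by simpa [ha₀, hb₀] using hga' i₀
  have hg1 : g 1 = 1 := hga none
  have hmono : StrictMono fun t => ⌊t⌋ + g (Int.fract t) := fun s t hst => by
    rcases (Int.floor_mono hst.le).lt_or_eq with hlt | heq
    · have h₁ : g (Int.fract s) < 1 := hg1 ▸ hg (Int.fract_lt_one s)
      have h₂ : 0 ≤ g (Int.fract t) := hg0 ▸ hg.monotone (Int.fract_nonneg t)
      have : (⌊s⌋ : ℝ) + 1 ≤ ⌊t⌋ := by exact_mod_cast hlt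
      linarith
    · have : g (Int.fract s) < g (Int.fract t) := hg (by rw [Int.fract, Int.fract, heq]; linarith)
      simp only [heq]
      linarith
  refine ⟨⟨⟨fun t => ⌊t⌋ + g (Int.fract t), hmono.monotone⟩, fun t => ?_⟩, hmono, fun i => ?_⟩
  · simp only [Int.floor_add_one, Int.fract_add_one, Int.cast_add, Int.cast_one]
    ring
  · change (⌊a i⌋ : ℝ) + g (Int.fract (a i)) = b i
    rw [hfloor, hga']
    exact Int.floor_add_fract (b i)

namespace Timed

namespace CmpOp

theorem holds_iff_of_le_iff {a b c d : ℝ} (h₁ : a ≤ c ↔ b ≤ d) (h₂ : c ≤ a ↔ d ≤ b) :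
    ∀ op : CmpOp, op.holds a c ↔ op.holds b d
  | lt => by simp only [holds, ← not_le, h₂]
  | le => h₁
  | eq => by simp only [holds, le_antisymm_iff, h₁, h₂]
  | ge => h₂
  | gt => by simp only [holds, gt_iff_lt, ← not_le, h₁]

def swap : CmpOp → CmpOp
  | lt => gt
  | le => ge
  | eq => eq
  | ge => le
  | gt => lt

theorem holds_neg (op : CmpOp) (a c : ℝ) : op.holds (-a) c ↔ op.swap.holds a (-c) := by
  cases op <;> simp only [holds, swap, ge_iff_le, gt_iff_lt] <;> constructor <;> intro h <;> linarith

def DelaySim (op : CmpOp) (c a a' : ℝ) : Prop :=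
  ∀ δ : ℝ, 0 ≤ δ → op.holds (a + δ) c → op.holds (a' + δ) c

variable {c a a' b : ℝ}

theorem delaySim_lt_iff : lt.DelaySim c a a' ↔ c ≤ a ∨ a' ≤ a := by
  simp only [DelaySim, holds]
  refine ⟨fun h => ?_, fun h δ _ hδ => by rcases h with h | h <;> linarith⟩
  by_contra! hc
  rcases le_or_gt a' c with h' | h'
  · linarith [h (c - a') (by linarith) (by linarith)]
  · linarith [h 0 le_rfl (by linarith)]

theorem delaySim_le_iff : le.DelaySim c a a' ↔ c < a ∨ a' ≤ a := by
  simp only [DelaySim, holds]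
  refine ⟨fun h => ?_, fun h δ _ hδ => by rcases h with h | h <;> linarith⟩
  by_contra! hc
  linarith [h (c - a) (by linarith) (by linarith)]

theorem delaySim_eq_iff : eq.DelaySim c a a' ↔ c < a ∨ a' = a := by
  simp only [DelaySim, holds]
  refine ⟨fun h => ?_, fun h δ _ hδ => by rcases h with h | h <;> linarith⟩
  by_contra! hc
  exact hc.2 (by linarith [h (c - a) (by linarith) (by linarith)])

theorem delaySim_ge_iff : ge.DelaySim c a a' ↔ lt.DelaySim c a' a := by
  simp only [DelaySim, holds, ge_iff_le, ← not_lt]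
  exact forall₂_congr fun _ _ => not_imp_not

theorem delaySim_gt_iff : gt.DelaySim c a a' ↔ le.DelaySim c a' a := by
  simp only [DelaySim, holds, gt_iff_lt, ← not_le]
  exact forall₂_congr fun _ _ => not_imp_not

theorem delaySim_strictMono {f : ℝ → ℝ} (hf : StrictMono f) (op : CmpOp) :
    op.DelaySim (f c) (f a) (f a') ↔ op.DelaySim c a a' := by
  cases op <;>
    simp only [delaySim_ge_iff, delaySim_gt_iff, delaySim_lt_iff, delaySim_le_iff,
      delaySim_eq_iff, hf.le_iff_le, hf.lt_iff_lt, hf.injective.eq_iff]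

theorem delaySim_congr_left (ha : c < a) (hb : c < b) (op : CmpOp) :
    op.DelaySim c a a' ↔ op.DelaySim c b a' := by
  cases op <;>
    simp only [delaySim_ge_iff, delaySim_gt_iff, delaySim_lt_iff, delaySim_le_iff,
      delaySim_eq_iff]
  · exact iff_of_true (.inl ha.le) (.inl hb.le)
  · exact iff_of_true (.inl ha) (.inl hb)
  · exact iff_of_true (.inl ha) (.inl hb)
  all_goals constructor <;> rintro (h | h) <;> exact .inl (by linarith)

end CmpOp

namespace Atom

variable {X : Type}

def const : Atom X → ℤ
  | single _ _ c => c
  | negSingle _ _ c => c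
  | diag _ _ _ c => c

def DelaySim (φ : Atom X) (v v' : Val X) : Prop :=
  ∀ δ : NNReal, φ.sat (addVal v δ) → φ.sat (addVal v' δ)

variable {v v' : Val X}

theorem delaySim_single_iff {x : X} {op : CmpOp} {c : ℤ} :
    (single x op c).DelaySim v v' ↔ op.DelaySim c (v x) (v' x) :=
  ⟨fun h δ hδ => h ⟨δ, hδ⟩, fun h δ => h δ δ.2⟩

theorem delaySim_negSingle_iff {y : X} {op : CmpOp} {c : ℤ} :
    (negSingle y op c).DelaySim v v' ↔ op.swap.DelaySim (-c : ℤ) (v y) (v' y) := by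
  simp only [DelaySim, CmpOp.DelaySim, sat, addVal, NNReal.coe_add, CmpOp.holds_neg,
    Int.cast_neg]
  exact ⟨fun h δ hδ => h ⟨δ, hδ⟩, fun h δ => h δ δ.2⟩

theorem delaySim_diag_iff {x y : X} {op : CmpOp} {c : ℤ} :
    (diag x y op c).DelaySim v v' ↔
      (op.holds ((v x : ℝ) - v y) c → op.holds ((v' x : ℝ) - v' y) c) := by
  simp only [DelaySim, sat, addVal, NNReal.coe_add, add_sub_add_right_eq_sub]
  exact ⟨fun h => h 0, fun h _ => h⟩

theorem delaySim_refl (φ : Atom X) (v : Val X) : φ.DelaySim v v := fun _ h => h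

end Atom

theorem gPre_iff {Q X : Type} {G : Q → Set (Atom X)} {q : Q} {v v' : Val X} :
    GPre G (q, v) (q, v') ↔ ∀ φ ∈ G q, φ.DelaySim v v' := by
  simp only [GPre, Atom.DelaySim, true_and]
  exact ⟨fun h φ hφ δ => h δ φ hφ, fun h δ φ hφ => h φ hφ δ⟩

section Profile

variable {X : Type}

/-- Clock values, with `none` standing for the zero clock `x₀`. -/
def zval (v : Val X) : Option X → ℝ := fun p => p.elim 0 fun x => v x

theorem zval_nonneg (v : Val X) : ∀ p, 0 ≤ zval v p
  | none => le_rfl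
  | some x => (v x).2

/-- The region of `v` for constants up to `M` (diagonal constraints included), encoded as a
finite datum. -/
def profile (M : ℕ) (v : Val X) : Option X × Option X × Set.Icc (-(M : ℤ)) M → Prop :=
  fun e => zval v e.1 - zval v e.2.1 ≤ (e.2.2 : ℤ)

variable {M : ℕ} {u v : Val X}

theorem sub_le_iff_of_profile_eq (h : profile M v = profile M u) (p q : Option X) {c : ℤ}
    (hc : |c| ≤ M) : zval v p - zval v q ≤ c ↔ zval u p - zval u q ≤ c :=
  (congrFun h (p, q, ⟨c, abs_le.1 hc⟩)).to_iff

theorem holds_sub_iff_of_profile_eq (h : profile M v = profile M u) (p q : Option X) {c : ℤ}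
    (hc : |c| ≤ M) (op : CmpOp) :
    op.holds (zval v p - zval v q) c ↔ op.holds (zval u p - zval u q) c := by
  refine CmpOp.holds_iff_of_le_iff (sub_le_iff_of_profile_eq h p q hc) ?_ op
  have hswap : ∀ w : Val X, (c : ℝ) ≤ zval w p - zval w q ↔ zval w q - zval w p ≤ (-c : ℤ) :=
    fun w => by push_cast; constructor <;> intro <;> linarith
  rw [hswap, hswap]
  exact sub_le_iff_of_profile_eq h q p (by rwa [abs_neg])

theorem le_iff_of_profile_eq (h : profile M v = profile M u) (x : X) :
    (v x : ℝ) ≤ M ↔ (u x : ℝ) ≤ M := by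
  simpa [zval] using sub_le_iff_of_profile_eq h (some x) none (c := M) (by simp)

theorem le_add_iff_of_profile_eq (h : profile M v = profile M u) {p q : Option X}
    (hp : zval v p ≤ M) (hq : zval v q ≤ M) (n : ℤ) :
    zval v p ≤ zval v q + n ↔ zval u p ≤ zval u q + n := by
  have hbound : ∀ {p}, zval v p ≤ M → zval u p ≤ M := fun {p} hp => by
    cases p with
    | none => exact hp
    | some x => exact (le_iff_of_profile_eq h x).1 hp
  rcases lt_or_ge (M : ℤ) n with hn | hn
  · have hn : (M : ℝ) < n := by exact_mod_cast hn
    exact iff_of_true (by linarith [zval_nonneg v q]) (by linarith [zval_nonneg u q, hbound hp])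
  rcases lt_or_ge n (-M) with hn' | hn'
  · have hn' : (n : ℝ) < -M := by exact_mod_cast hn'
    exact iff_of_false (by linarith [zval_nonneg v p]) (by linarith [zval_nonneg u p, hbound hq])
  simpa only [sub_le_iff_le_add'] using sub_le_iff_of_profile_eq h p q (abs_le.2 ⟨hn', hn⟩)

theorem exists_circleDeg1Lift_of_profile_eq [Finite X] (h : profile M v = profile M u) :
    ∃ f : CircleDeg1Lift, StrictMono f ∧ f 0 = 0 ∧ ∀ x, (v x : ℝ) ≤ M → f (v x) = u x := by
  obtain ⟨f, hf, hfab⟩ := exists_circleDeg1Lift_extension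
    (fun p : {p : Option X // zval v p ≤ M} => zval v p) (fun p => zval u p)
    ⟨none, Nat.cast_nonneg M⟩ rfl rfl fun p q n => le_add_iff_of_profile_eq h p.2 q.2 n
  exact ⟨f, hf, hfab ⟨none, Nat.cast_nonneg M⟩, fun x hx => hfab ⟨some x, hx⟩⟩

end Profile

section Transport

variable {X : Type} {f : CircleDeg1Lift}

namespace CmpOp

theorem holds_map_sub_map (hf : StrictMono f) (op : CmpOp) (a b : ℝ) (n : ℤ) :
    op.holds (f a - f b) n ↔ op.holds (a - b) n := by
  refine holds_iff_of_le_iff ?_ ?_ op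
  · rw [sub_le_iff_le_add', sub_le_iff_le_add', ← f.map_add_int, hf.le_iff_le]
  · rw [le_sub_iff_add_le', le_sub_iff_add_le', ← f.map_add_int, hf.le_iff_le]

theorem holds_map (hf : StrictMono f) (hf0 : f 0 = 0) (op : CmpOp) (a : ℝ) (n : ℤ) :
    op.holds (f a) n ↔ op.holds a n := by
  simpa [hf0] using holds_map_sub_map hf op a 0 n

theorem DelaySim.map (hf : StrictMono f) (hf0 : f 0 = 0) {op : CmpOp} {c : ℤ} {a a' b : ℝ}
    (hb : b = f a ∨ (c < b ∧ c < a)) (h : op.DelaySim c a a') : op.DelaySim c b (f a') := by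
  have hfc : f c = c := by rw [f.map_int_of_map_zero, hf0, zero_add]
  have hfa : op.DelaySim c (f a) (f a') := by rwa [← hfc, delaySim_strictMono hf]
  rcases hb with rfl | ⟨hcb, hca⟩
  · exact hfa
  · exact (delaySim_congr_left (hfc ▸ hf hca) hcb op).1 hfa

end CmpOp

theorem ClockConstraint.sat_map (hf : StrictMono f) (hf0 : f 0 = 0) {v w : Val X}
    (hw : ∀ x, (w x : ℝ) = f (v x)) (g : ClockConstraint X) : g.sat w ↔ g.sat v := by
  induction g with
  | tt => exact Iff.rfl
  | single x op c => simp only [sat, hw, CmpOp.holds_map hf hf0]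
  | diag x y op c => simp only [sat, hw, CmpOp.holds_map_sub_map hf]
  | conj g₁ g₂ ih₁ ih₂ => exact and_congr ih₁ ih₂

variable {M : ℕ} {u v : Val X}

theorem Atom.DelaySim.map_of_profile_eq {φ : Atom X} (hφ : |φ.const| ≤ M)
    (hprof : profile M v = profile M u) (hf : StrictMono f) (hf0 : f 0 = 0)
    (hfv : ∀ x, (v x : ℝ) ≤ M → f (v x) = u x) {v' u' : Val X}
    (hu' : ∀ x, (u' x : ℝ) = f (v' x)) (h : φ.DelaySim v v') : φ.DelaySim u u' := by
  -- Clocks above `M` can only be compared with constants below them.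
  have hclock : ∀ x {c : ℤ}, c ≤ M → (u x : ℝ) = f (v x) ∨ ((c : ℝ) < u x ∧ (c : ℝ) < v x) := by
    intro x c hc
    have hc : (c : ℝ) ≤ M := by exact_mod_cast hc
    by_cases hx : (v x : ℝ) ≤ M
    · exact .inl (hfv x hx).symm
    · have hu := (le_iff_of_profile_eq hprof x).not.1 hx
      exact .inr ⟨by linarith [not_le.1 hu], by linarith [not_le.1 hx]⟩
  cases φ with
  | single x op c =>
    rw [Atom.delaySim_single_iff] at h ⊢
    rw [hu']
    exact h.map hf hf0 (hclock x (abs_le.1 hφ).2)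
  | negSingle y op c =>
    rw [Atom.delaySim_negSingle_iff] at h ⊢
    rw [hu']
    exact h.map hf hf0 (hclock y (neg_le.1 (abs_le.1 hφ).1))
  | diag x y op c =>
    rw [Atom.delaySim_diag_iff] at h ⊢
    rw [hu', hu', CmpOp.holds_map_sub_map hf]
    exact fun hu => h ((holds_sub_iff_of_profile_eq hprof (some x) (some y) hφ op).2 hu)

def downset (Γ : Set (Atom X)) (Z : Set (Val X)) : Set (Val X) :=
  {v | ∃ v' ∈ Z, ∀ φ ∈ Γ, φ.DelaySim v v'}

theorem mem_downset_of_profile_eq [Finite X] {Γ : Set (Atom X)} {Z : Set (Val X)}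
    (hZ : IsZone Z) (hΓ : ∀ φ ∈ Γ, |φ.const| ≤ M) (hprof : profile M v = profile M u)
    (hv : v ∈ downset Γ Z) : u ∈ downset Γ Z := by
  obtain ⟨g, rfl⟩ := hZ
  obtain ⟨v', hv', hsim⟩ := hv
  obtain ⟨f, hf, hf0, hfv⟩ := exists_circleDeg1Lift_of_profile_eq hprof
  let u' : Val X := fun x => ⟨f (v' x), hf0 ▸ hf.monotone (v' x).2⟩
  exact ⟨u', (ClockConstraint.sat_map hf hf0 (fun _ => rfl) g).2 hv',
    fun φ hφ => (hsim φ hφ).map_of_profile_eq (hΓ φ hφ) hprof hf hf0 hfv fun _ => rfl⟩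

end Transport

section Constants

variable {Q X : Type}

theorem atomsOf_finite (g : ClockConstraint X) : (atomsOf g).Finite := by
  induction g with
  | tt => exact Set.finite_empty
  | single => exact Set.finite_singleton _
  | diag => exact Set.finite_singleton _
  | conj _ _ ih₁ ih₂ => exact ih₁.union ih₂

theorem Atom.const_eq_of_mem_preAtom {Y : Set X} {φ ψ : Atom X} (h : φ ∈ preAtom Y ψ) :
    φ.const = ψ.const := by
  cases ψ <;> simp only [preAtom] at h <;> split_ifs at h <;>
    simp_all only [Set.mem_empty_iff_false, Set.mem_singleton_iff] <;> rfl

def guardConstants (A : Automaton Q X) : Set ℤ :=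
  ⋃ t ∈ A.trans, Atom.const '' atomsOf t.2.1

theorem guardConstants_finite {A : Automaton Q X} (hT : A.trans.Finite) :
    (guardConstants A).Finite :=
  hT.biUnion fun t _ => (atomsOf_finite t.2.1).image _

theorem cmapStep_restrict {A : Automaton Q X} {G : Q → Set (Atom X)}
    (hfix : cmapStep A G = G) :
    cmapStep A (fun q => {φ ∈ G q | φ.const ∈ guardConstants A}) =
      fun q => {φ ∈ G q | φ.const ∈ guardConstants A} := by
  ext q φ
  constructor
  · rintro ⟨g, Y, q', ht, hφ | ⟨ψ, ⟨hψ, hψc⟩, hpre⟩⟩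
    · exact ⟨hfix ▸ ⟨g, Y, q', ht, .inl hφ⟩, Set.mem_biUnion ht ⟨φ, hφ, rfl⟩⟩
    · exact ⟨hfix ▸ ⟨g, Y, q', ht, .inr ⟨ψ, hψ, hpre⟩⟩, Atom.const_eq_of_mem_preAtom hpre ▸ hψc⟩
  · rintro ⟨hφ, hφc⟩
    rw [← hfix] at hφ
    obtain ⟨g, Y, q', ht, hφ | ⟨ψ, hψ, hpre⟩⟩ := hφ
    · exact ⟨g, Y, q', ht, .inl hφ⟩
    · exact ⟨g, Y, q', ht, .inr ⟨ψ, ⟨hψ, Atom.const_eq_of_mem_preAtom hpre ▸ hφc⟩, hpre⟩⟩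

theorem exists_abs_const_le {A : Automaton Q X} (hT : A.trans.Finite) {G : Q → Set (Atom X)}
    (hfix : cmapStep A G = G)
    (hleast : ∀ G' : Q → Set (Atom X), cmapStep A G' = G' → ∀ q, G q ⊆ G' q) :
    ∃ M : ℕ, ∀ q, ∀ φ ∈ G q, |φ.const| ≤ M := by
  obtain ⟨M, hM⟩ := ((guardConstants_finite hT).image Int.natAbs).bddAbove
  refine ⟨M, fun q φ hφ => ?_⟩
  rw [Int.abs_eq_natAbs, Nat.cast_le]
  exact hM ⟨φ.const, (hleast _ (cmapStep_restrict hfix) q hφ).2, rfl⟩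

end Constants

end Timed

/-- the `G`-preorder is finite on symbolic states. -/
theorem gpre_is_finite {Q X : Type} [Fintype Q] [Fintype X]
    (A : Automaton Q X) (hT : A.trans.Finite)
    (G : Q → Set (Atom X))
    (hfix : cmapStep A G = G)
    (hleast : ∀ G' : Q → Set (Atom X), cmapStep A G' = G' → ∀ q, G q ⊆ G' q)
    (seq : ℕ → Q × Set (Val X))
    (hsymb : ∀ n, IsZone (seq n).2 ∧ (seq n).2 ≠ ∅) :
    ∃ i j : ℕ, i < j ∧ (seq i).1 = (seq j).1 ∧
      ∀ v ∈ (seq j).2, ∃ v' ∈ (seq i).2, GPre G ((seq j).1, v) ((seq i).1, v') := by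
  obtain ⟨M, hM⟩ := exists_abs_const_le hT hfix hleast
  obtain ⟨i, j, hij, hkey⟩ := Set.finite_univ.exists_lt_map_eq_of_forall_mem
    (f := fun n => ((seq n).1, profile M '' downset (G (seq n).1) (seq n).2))
    fun _ => Set.mem_univ _
  obtain ⟨hq, hD⟩ := Prod.mk.inj hkey
  refine ⟨i, j, hij, hq, fun v hv => ?_⟩
  obtain ⟨w, hw, hwv⟩ : profile M v ∈ profile M '' downset (G (seq i).1) (seq i).2 :=
    hD ▸ ⟨v, ⟨v, hv, fun φ _ => φ.delaySim_refl v⟩, rfl⟩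
  obtain ⟨v', hv', hsim⟩ := mem_downset_of_profile_eq (hsymb i).1 (hM _) hwv hw
  exact ⟨v', hv', hq ▸ gPre_iff.2 hsim⟩
end
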